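/- arXiv:1905.09237 — 10 statements merged into one kernel-verified Lean document; each statement's English description precedes it below -/
import Mathlib

section
/- The Patankar-modified Euler scheme is unconditionally positive: if c^n ∈ ℝ^I has all positive entries, p_{i,j}(c^n) ≥ 0, d_{i,j}(c^n) ≥ 0, and Δt > 0, then any solution c^{n+1} of the implicit system c_i^{n+1} = c_i^n + Δt(Σ_j p_{i,j}(c^n) - Σ_j d_{i,j}(c^n) c_i^{n+1}/c_i^n) is given explicitly by c_i^{n+1} = (c_i^n + Δt Σ_j p_{i,j}(c^n)) / (1 + Δt Σ_j d_{i,j}(c^n)/c_i^n), and all its entries are positive. -/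
/-- The Patankar-modified Euler scheme is unconditionally positive: any solution of the
decoupled implicit Patankar equation is given by the explicit formula and is positive. -/
theorem patankar_euler_unconditionally_positive
    (I : ℕ) (p d : Fin I → Fin I → ℝ)
    (hp : ∀ i j, 0 ≤ p i j) (hd : ∀ i j, 0 ≤ d i j)
    (Δt : ℝ) (hΔt : 0 < Δt)
    (cn : Fin I → ℝ) (hpos : ∀ i, 0 < cn i)
    (x : Fin I → ℝ)
    (hx : ∀ i, x i = cn i + Δt * (∑ j, p i j - (∑ j, d i j) * (x i / cn i))) :
    ∀ i, x i = (cn i + Δt * ∑ j, p i j) / (1 + Δt * (∑ j, d i j) / cn i) ∧ 0 < x i := by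
  intro i
  have hc := hpos i
  have hP : 0 ≤ ∑ j, p i j := Finset.sum_nonneg fun j _ => hp i j
  have hD : 0 ≤ ∑ j, d i j := Finset.sum_nonneg fun j _ => hd i j
  have hden : 0 < 1 + Δt * (∑ j, d i j) / cn i := by positivity
  have heq : x i = (cn i + Δt * ∑ j, p i j) / (1 + Δt * (∑ j, d i j) / cn i) := by
    rw [eq_div_iff hden.ne']
    have := hx i
    field_simp at this ⊢
    linarith [this]
  refine ⟨heq, ?_⟩
  rw [heq]
  have hnum : 0 < cn i + Δt * ∑ j, p i j := by positivity
  exact div_pos hnum hden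
end

section
/- The modified Patankar Euler scheme is unconditionally conservative: if p_{i,j}(c^n) = d_{j,i}(c^n) for all i,j and c^{n+1} solves c_i^{n+1} = c_i^n + Δt Σ_j (p_{i,j}(c^n) c_j^{n+1}/c_j^n − d_{i,j}(c^n) c_i^{n+1}/c_i^n) for all i, then Σ_i c_i^{n+1} = Σ_i c_i^n. -/
/-- The modified Patankar Euler scheme is unconditionally conservative. -/
theorem modified_patankar_euler_conservative
    (I : ℕ) (p d : Fin I → Fin I → ℝ)
    (hp : ∀ i j, 0 ≤ p i j) (hd : ∀ i j, 0 ≤ d i j)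
    (hcons : ∀ i j, p i j = d j i)
    (Δt : ℝ) (hΔt : 0 < Δt)
    (cn : Fin I → ℝ) (hpos : ∀ i, 0 < cn i)
    (cnp1 : Fin I → ℝ)
    (hupdate : ∀ i, cnp1 i = cn i +
      Δt * ∑ j, (p i j * (cnp1 j / cn j) - d i j * (cnp1 i / cn i))) :
    ∑ i, cnp1 i = ∑ i, cn i := by
  have key : ∑ i, ∑ j, (p i j * (cnp1 j / cn j) - d i j * (cnp1 i / cn i)) = 0 := by
    simp only [Finset.sum_sub_distrib]
    rw [Finset.sum_comm (f := fun i j => p i j * (cnp1 j / cn j)), sub_eq_zero]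
    exact Finset.sum_congr rfl fun j _ => Finset.sum_congr rfl fun i _ => by rw [hcons]
  calc ∑ i, cnp1 i = ∑ i, (cn i + Δt * ∑ j, (p i j * (cnp1 j / cn j) - d i j * (cnp1 i / cn i))) := by
        exact Finset.sum_congr rfl fun i _ => hupdate i
    _ = ∑ i, cn i + Δt * ∑ i, ∑ j, (p i j * (cnp1 j / cn j) - d i j * (cnp1 i / cn i)) := by
        rw [Finset.sum_add_distrib, Finset.mul_sum]
    _ = ∑ i, cn i := by rw [key, mul_zero, add_zero]
end

section
/- The mass matrix M of the modified Patankar Euler scheme, defined by M_{ii} = 1 + Δt Σ_k d_{i,k}(c^n)/c_i^n and M_{ij} = −Δt p_{i,j}(c^n)/c_j^n for i ≠ j, is strictly diagonally dominant by columns, i.e., for every column j, M_{jj} > Σ_{i≠j} |M_{ij}|. -/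
/-!
The off-diagonal entries of the mass matrix are nonpositive, and conservativity `p i j = d j i`
makes every column sum to exactly `1`. Hence the absolute off-diagonal sum of column `j` is
`M j j - 1 < M j j`.
-/

open Finset

theorem Matrix.sum_erase_abs_lt_diag_of_offDiag_nonpos {ι : Type*} [Fintype ι] [DecidableEq ι]
    (M : Matrix ι ι ℝ) (hoff : ∀ i j, i ≠ j → M i j ≤ 0) (j : ι) (hcol : 0 < ∑ i, M i j) :
    ∑ i ∈ univ.erase j, |M i j| < M j j := by
  have habs : ∑ i ∈ univ.erase j, |M i j| = -∑ i ∈ univ.erase j, M i j := by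
    rw [← sum_neg_distrib]
    exact sum_congr rfl fun i hi => abs_of_nonpos (hoff i j (ne_of_mem_erase hi))
  have hsplit := add_sum_erase univ (fun i => M i j) (mem_univ j)
  linarith

section Patankar

variable {ι : Type*} [Fintype ι] [DecidableEq ι]

noncomputable def patankarMassMatrix (Δt : ℝ) (p d : ι → ι → ℝ) (c : ι → ℝ) : Matrix ι ι ℝ :=
  Matrix.of fun i j => if i = j then 1 + Δt * ∑ k, d i k / c i else -(Δt * p i j / c j)

theorem patankarMassMatrix_nonpos_of_ne {Δt : ℝ} {p : ι → ι → ℝ} (d : ι → ι → ℝ) {c : ι → ℝ}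
    (hΔt : 0 ≤ Δt) (hp : ∀ i j, 0 ≤ p i j) (hc : ∀ i, 0 ≤ c i) {i j : ι} (hij : i ≠ j) :
    patankarMassMatrix Δt p d c i j ≤ 0 := by
  rw [patankarMassMatrix, Matrix.of_apply, if_neg hij, neg_nonpos]
  exact div_nonneg (mul_nonneg hΔt (hp i j)) (hc j)

theorem sum_patankarMassMatrix_col (Δt : ℝ) {p d : ι → ι → ℝ} (c : ι → ℝ)
    (hcons : ∀ i j, p i j = d j i) (hdiag : ∀ i, d i i = 0) (j : ι) :
    ∑ i, patankarMassMatrix Δt p d c i j = 1 := by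
  have hoff : ∑ i ∈ univ.erase j, patankarMassMatrix Δt p d c i j = -(Δt * ∑ k, d j k / c j) := by
    rw [← sum_erase univ (f := fun k => d j k / c j) (by rw [hdiag, zero_div]), mul_sum,
      ← sum_neg_distrib]
    refine sum_congr rfl fun i hi => ?_
    rw [patankarMassMatrix, Matrix.of_apply, if_neg (ne_of_mem_erase hi), hcons, mul_div_assoc]
  rw [← add_sum_erase univ _ (mem_univ j), hoff, patankarMassMatrix, Matrix.of_apply, if_pos rfl]
  ring

end Patankar

theorem modified_patankar_mass_matrix_diag_dominant_general
    (I : ℕ) (p d : Fin I → Fin I → ℝ)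
    (hp : ∀ i j, 0 ≤ p i j)
    (hcons : ∀ i j, p i j = d j i)
    (hdiagd : ∀ i, d i i = 0)
    (Δt : ℝ) (hΔt : 0 < Δt)
    (cn : Fin I → ℝ) (hpos : ∀ i, 0 < cn i)
    (M : Matrix (Fin I) (Fin I) ℝ)
    (hM : ∀ i j, M i j =
      if i = j then 1 + Δt * ∑ k, d i k / cn i else -(Δt * p i j / cn j)) :
    ∀ j, ∑ i ∈ Finset.univ.erase j, |M i j| < M j j := by
  obtain rfl : M = patankarMassMatrix Δt p d cn := Matrix.ext hM
  intro j
  refine Matrix.sum_erase_abs_lt_diag_of_offDiag_nonpos _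
    (fun i j hij => patankarMassMatrix_nonpos_of_ne d hΔt.le hp (fun i => (hpos i).le) hij) j ?_
  rw [sum_patankarMassMatrix_col Δt cn hcons hdiagd j]
  exact one_pos

/-- The mass matrix of the modified Patankar Euler scheme is strictly diagonally dominant by
columns. -/
theorem modified_patankar_mass_matrix_diag_dominant
    (I : ℕ) (p d : Fin I → Fin I → ℝ)
    (hp : ∀ i j, 0 ≤ p i j) (hd : ∀ i j, 0 ≤ d i j)
    (hcons : ∀ i j, p i j = d j i)
    (hdiagp : ∀ i, p i i = 0) (hdiagd : ∀ i, d i i = 0)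
    (Δt : ℝ) (hΔt : 0 < Δt)
    (cn : Fin I → ℝ) (hpos : ∀ i, 0 < cn i)
    (M : Matrix (Fin I) (Fin I) ℝ)
    (hM : ∀ i j, M i j =
      if i = j then 1 + Δt * ∑ k, d i k / cn i else -(Δt * p i j / cn j)) :
    ∀ j, ∑ i ∈ Finset.univ.erase j, |M i j| < M j j :=
  modified_patankar_mass_matrix_diag_dominant_general I p d hp hcons hdiagd Δt hΔt cn hpos M hM
end

section
/- Let M ∈ ℝ^{I×I} be a matrix with positive diagonal entries, nonpositive off-diagonal entries, and strict diagonal dominance by columns (M_{jj} > Σ_{i≠j} |M_{ij}| for every j). Then M is invertible and every entry of M^{-1} is nonnegative. -/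
/-! If `x ᵥ* M ≥ 0` and `x` had a negative entry, look at a minimal entry `x k < 0`: since the
off-diagonal entries of column `k` are nonpositive, `(x ᵥ* M) k ≤ x k * ∑ t, M t k < 0`, because
diagonal dominance makes every column sum positive. Applied to the rows of `M⁻¹`, for which
`M⁻¹ i ᵥ* M = Pi.single i 1 ≥ 0`, this gives `M⁻¹ ≥ 0`; invertibility is Gershgorin's theorem. -/

namespace Matrix

variable {n R : Type*} [Fintype n] [Ring R] [LinearOrder R] [IsStrictOrderedRing R]

theorem sum_col_pos_of_offDiag_nonpos_of_sum_abs_lt_diag [DecidableEq n] {M : Matrix n n R}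
    (hoff : ∀ i j, i ≠ j → M i j ≤ 0) (hdom : ∀ j, ∑ i ∈ Finset.univ.erase j, |M i j| < M j j)
    (j : n) : 0 < ∑ i, M i j := by
  have habs : ∑ i ∈ Finset.univ.erase j, M i j = -∑ i ∈ Finset.univ.erase j, |M i j| := by
    rw [← Finset.sum_neg_distrib]
    refine Finset.sum_congr rfl fun i hi => ?_
    rw [abs_of_nonpos (hoff i j (Finset.ne_of_mem_erase hi)), neg_neg]
  rw [← Finset.add_sum_erase _ _ (Finset.mem_univ j), habs, ← sub_eq_add_neg, sub_pos]
  exact hdom j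

theorem nonneg_of_nonneg_vecMul {M : Matrix n n R} (hoff : ∀ i j, i ≠ j → M i j ≤ 0)
    (hcol : ∀ j, 0 < ∑ i, M i j) {x : n → R} (hx : 0 ≤ x ᵥ* M) : 0 ≤ x := by
  intro j
  by_contra! hneg
  obtain ⟨k, -, hmin⟩ := Finset.exists_min_image Finset.univ x ⟨j, Finset.mem_univ j⟩
  have hxk : x k < 0 := (hmin j (Finset.mem_univ j)).trans_lt hneg
  have hterm : ∀ t, x t * M t k ≤ x k * M t k := by
    intro t
    rcases eq_or_ne t k with rfl | htk
    · rfl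
    · exact mul_le_mul_of_nonpos_right (hmin t (Finset.mem_univ t)) (hoff t k htk)
  have : (x ᵥ* M) k < 0 :=
    calc (x ᵥ* M) k = ∑ t, x t * M t k := rfl
      _ ≤ ∑ t, x k * M t k := Finset.sum_le_sum fun t _ => hterm t
      _ = x k * ∑ t, M t k := (Finset.mul_sum _ _ _).symm
      _ < 0 := mul_neg_of_neg_of_pos hxk (hcol k)
  exact this.not_ge (hx k)

end Matrix

theorem diag_dominant_M_matrix_inverse_nonneg_general
    (I : ℕ) (M : Matrix (Fin I) (Fin I) ℝ)
    (hoff : ∀ i j, i ≠ j → M i j ≤ 0)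
    (hdom : ∀ j, ∑ i ∈ Finset.univ.erase j, |M i j| < M j j) :
    IsUnit M ∧ ∀ i j, 0 ≤ M⁻¹ i j := by
  have hdet : IsUnit M.det := by
    refine isUnit_iff_ne_zero.mpr (det_ne_zero_of_sum_col_lt_diag fun k => ?_)
    exact (hdom k).trans_le (le_abs_self _)
  refine ⟨(Matrix.isUnit_iff_isUnit_det M).mpr hdet, fun i => ?_⟩
  have hrow : Matrix.vecMul (M⁻¹ i) M = Pi.single i 1 := by
    rw [← Matrix.mul_apply_eq_vecMul, Matrix.nonsing_inv_mul M hdet]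
    exact funext fun j => Matrix.one_eq_pi_single
  refine Matrix.nonneg_of_nonneg_vecMul hoff
    (Matrix.sum_col_pos_of_offDiag_nonpos_of_sum_abs_lt_diag hoff hdom) ?_
  rw [hrow]
  exact Pi.single_nonneg.mpr zero_le_one

/-- A matrix with positive diagonal, nonpositive off-diagonal entries, strictly diagonally
dominant by columns, is invertible with entrywise nonnegative inverse. -/
theorem diag_dominant_M_matrix_inverse_nonneg
    (I : ℕ) (M : Matrix (Fin I) (Fin I) ℝ)
    (hdiag : ∀ i, 0 < M i i)
    (hoff : ∀ i j, i ≠ j → M i j ≤ 0)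
    (hdom : ∀ j, ∑ i ∈ Finset.univ.erase j, |M i j| < M j j) :
    IsUnit M ∧ ∀ i j, 0 ≤ M⁻¹ i j :=
  diag_dominant_M_matrix_inverse_nonneg_general I M hoff hdom
end

section
/- Let M ∈ ℝ^{I×I} have positive diagonal entries, nonpositive off-diagonal entries, and be strictly diagonally dominant by columns. If b ∈ ℝ^I has all positive entries, then the unique solution x of M x = b has all nonnegative entries. -/
/-! Invertibility is Gershgorin's theorem. For nonnegativity, sum the entries of `M x ≥ 0` over the
set `S` where `x` is negative: the result is `∑_j c_j x_j` with `c_j = ∑_{i ∈ S} M_{ij}`. Diagonal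
dominance makes `c_j > 0` for `j ∈ S` and the sign pattern makes `c_j ≤ 0` for `j ∉ S`, so this sum
is negative unless `S` is empty. -/

open Finset

namespace Matrix

variable {ι : Type*} [Fintype ι]

theorem sum_mulVec_eq_sum_colSum (M : Matrix ι ι ℝ) (x : ι → ℝ) (S : Finset ι) :
    ∑ i ∈ S, (M *ᵥ x) i = ∑ j, (∑ i ∈ S, M i j) * x j := by
  simp_rw [mulVec, dotProduct, sum_mul]
  exact sum_comm

variable [DecidableEq ι]

theorem isUnit_of_sum_abs_col_lt_diag {M : Matrix ι ι ℝ}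
    (hdom : ∀ j, ∑ i ∈ univ.erase j, |M i j| < M j j) : IsUnit M := by
  refine (isUnit_iff_isUnit_det M).mpr (isUnit_iff_ne_zero.mpr ?_)
  refine det_ne_zero_of_sum_col_lt_diag fun j => ?_
  simpa only [Real.norm_eq_abs] using (hdom j).trans_le (le_abs_self _)

theorem sum_col_pos_of_sum_abs_col_lt_diag {M : Matrix ι ι ℝ}
    (hdom : ∀ j, ∑ i ∈ univ.erase j, |M i j| < M j j) {S : Finset ι} {j : ι} (hj : j ∈ S) :
    0 < ∑ i ∈ S, M i j := by
  have hneg : -∑ i ∈ S.erase j, M i j ≤ ∑ i ∈ univ.erase j, |M i j| :=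
    calc -∑ i ∈ S.erase j, M i j = ∑ i ∈ S.erase j, -M i j := (sum_neg_distrib _).symm
      _ ≤ ∑ i ∈ S.erase j, |M i j| := sum_le_sum fun i _ => neg_le_abs _
      _ ≤ ∑ i ∈ univ.erase j, |M i j| :=
        sum_le_sum_of_subset_of_nonneg (erase_subset_erase _ (subset_univ _))
          fun _ _ _ => abs_nonneg _
  rw [← add_sum_erase _ _ hj]
  linarith [hdom j]

theorem nonneg_of_mulVec_nonneg {M : Matrix ι ι ℝ} (hoff : ∀ i j, i ≠ j → M i j ≤ 0)
    (hdom : ∀ j, ∑ i ∈ univ.erase j, |M i j| < M j j) {x : ι → ℝ}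
    (hx : ∀ i, 0 ≤ (M *ᵥ x) i) (i : ι) : 0 ≤ x i := by
  by_contra! hxi
  set S := univ.filter fun j => x j < 0
  have hiS : i ∈ S := mem_filter.mpr ⟨mem_univ i, hxi⟩
  have hterm : ∀ j ∈ univ, (∑ k ∈ S, M k j) * x j ≤ 0 := by
    intro j _
    by_cases hj : j ∈ S
    · exact (mul_neg_of_pos_of_neg (sum_col_pos_of_sum_abs_col_lt_diag hdom hj)
        (mem_filter.mp hj).2).le
    · have hxj : 0 ≤ x j := not_lt.mp fun h => hj (mem_filter.mpr ⟨mem_univ j, h⟩)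
      have hcol : ∑ k ∈ S, M k j ≤ 0 :=
        sum_nonpos fun k hk => hoff k j (ne_of_mem_of_not_mem hk hj)
      exact mul_nonpos_of_nonpos_of_nonneg hcol hxj
  have hlt : ∑ j, (∑ k ∈ S, M k j) * x j < 0 :=
    sum_neg' hterm ⟨i, mem_univ i, mul_neg_of_pos_of_neg
      (sum_col_pos_of_sum_abs_col_lt_diag hdom hiS) hxi⟩
  have hge : 0 ≤ ∑ k ∈ S, (M *ᵥ x) k := sum_nonneg fun k _ => hx k
  rw [sum_mulVec_eq_sum_colSum] at hge
  exact hlt.not_ge hge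

end Matrix

theorem diag_dominant_M_matrix_solution_nonneg_general
    (I : ℕ) (M : Matrix (Fin I) (Fin I) ℝ)
    (hoff : ∀ i j, i ≠ j → M i j ≤ 0)
    (hdom : ∀ j, ∑ i ∈ Finset.univ.erase j, |M i j| < M j j)
    (b : Fin I → ℝ) (hb : ∀ i, 0 < b i) :
    (∃! x : Fin I → ℝ, M.mulVec x = b) ∧
      ∀ x : Fin I → ℝ, M.mulVec x = b → ∀ i, 0 ≤ x i := by
  have hM : IsUnit M := Matrix.isUnit_of_sum_abs_col_lt_diag hdom
  refine ⟨?_, fun x hx => Matrix.nonneg_of_mulVec_nonneg hoff hdom fun i => hx ▸ (hb i).le⟩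
  exact (Function.Bijective.existsUnique
    ⟨Matrix.mulVec_injective_iff_isUnit.mpr hM, Matrix.mulVec_surjective_iff_isUnit.mpr hM⟩ b)

/-- For a column-diagonally-dominant M-matrix `M` and a positive vector `b`, the unique
solution of `M x = b` is entrywise nonnegative. -/
theorem diag_dominant_M_matrix_solution_nonneg
    (I : ℕ) (M : Matrix (Fin I) (Fin I) ℝ)
    (hdiag : ∀ i, 0 < M i i)
    (hoff : ∀ i j, i ≠ j → M i j ≤ 0)
    (hdom : ∀ j, ∑ i ∈ Finset.univ.erase j, |M i j| < M j j)
    (b : Fin I → ℝ) (hb : ∀ i, 0 < b i) :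
    (∃! x : Fin I → ℝ, M.mulVec x = b) ∧
      ∀ x : Fin I → ℝ, M.mulVec x = b → ∀ i, 0 ≤ x i :=
  diag_dominant_M_matrix_solution_nonneg_general I M hoff hdom b hb
end

section
/- The mass matrix of each mPDeC correction step, given by M_{ii} = 1 + Δt Σ_{r=0}^M Σ_l (θ_r^m / c_i^{m,(k-1)}) (d_{i,l}(c^{r,(k-1)}) 1_{θ_r^m>0} − p_{i,l}(c^{r,(k-1)}) 1_{θ_r^m<0}) and M_{ij} = −Δt Σ_{r=0}^M (θ_r^m / c_j^{m,(k-1)}) (p_{i,j}(c^{r,(k-1)}) 1_{θ_r^m>0} − d_{i,j}(c^{r,(k-1)}) 1_{θ_r^m<0}) for i ≠ j, has positive diagonal entries, nonpositive off-diagonal entries, and is strictly diagonally dominant by columns. -/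
/-!
Let `b i j ≥ 0` be the total weighted flux from `j` to `i`. The conservation property
`p i j = d j i` makes the off-diagonal entry exactly `-b i j` and the diagonal entry
`1 + ∑ i, b i j` (the `l = j` term vanishes as `p j j = d j j = 0`), so each column is dominated
with margin `1`. Nonnegativity of `b` holds term by term: the sign of `θ r` selects the
destruction or the production rate so that `θ r` times the selected rate is never negative.
-/

open Finset

noncomputable def signSplit (t X Y : ℝ) : ℝ :=
  (if 0 < t then X else 0) - (if t < 0 then Y else 0)

lemma mul_signSplit_nonneg {X Y : ℝ} (hX : 0 ≤ X) (hY : 0 ≤ Y) (t : ℝ) :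
    0 ≤ t * signSplit t X Y := by
  unfold signSplit
  rcases lt_trichotomy t 0 with ht | rfl | ht
  · rw [if_neg ht.not_gt, if_pos ht]
    nlinarith
  · simp
  · rw [if_pos ht, if_neg ht.not_gt]
    nlinarith

lemma div_mul_signSplit_nonneg {X Y c : ℝ} (hX : 0 ≤ X) (hY : 0 ≤ Y) (hc : 0 ≤ c) (t : ℝ) :
    0 ≤ t / c * signSplit t X Y := by
  rw [div_mul_eq_mul_div]
  exact div_nonneg (mul_signSplit_nonneg hX hY t) hc

lemma signSplit_zero_zero (t : ℝ) : signSplit t 0 0 = 0 := by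
  simp [signSplit]

lemma Matrix.columnDominant_of_eq_one_add_colSum {n : Type*} [Fintype n] [DecidableEq n]
    (A : Matrix n n ℝ) (b : n → n → ℝ) (hb : ∀ i j, 0 ≤ b i j) (hb_diag : ∀ j, b j j = 0)
    (hA_diag : ∀ j, A j j = 1 + ∑ i, b i j) (hA_off : ∀ i j, i ≠ j → A i j = -b i j) :
    (∀ i, 0 < A i i) ∧ (∀ i j, i ≠ j → A i j ≤ 0) ∧
      ∀ j, ∑ i ∈ univ.erase j, |A i j| < A j j := by
  have h_off : ∀ i j, i ≠ j → A i j ≤ 0 := fun i j hij => by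
    rw [hA_off i j hij]
    exact neg_nonpos.mpr (hb i j)
  refine ⟨fun i => ?_, h_off, fun j => ?_⟩
  · rw [hA_diag]
    linarith [sum_nonneg fun k (_ : k ∈ univ) => hb k i]
  · have h_col : ∑ i ∈ univ.erase j, |A i j| = ∑ i, b i j := by
      rw [← sum_erase univ (f := (b · j)) (hb_diag j)]
      refine sum_congr rfl fun i hi => ?_
      have hij := ne_of_mem_erase hi
      rw [abs_of_nonpos (h_off i j hij), hA_off i j hij, neg_neg]
    rw [h_col, hA_diag]
    linarith

theorem mPDeC_mass_matrix_properties_general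
    (Ms I : ℕ) (θ : Fin (Ms + 1) → ℝ) (Δt : ℝ) (hΔt : 0 < Δt)
    (p d : (Fin I → ℝ) → Fin I → Fin I → ℝ)
    (hp : ∀ c i j, 0 ≤ p c i j) (hd : ∀ c i j, 0 ≤ d c i j)
    (hcons : ∀ c i j, p c i j = d c j i)
    (hdiagp : ∀ c i, p c i i = 0) (hdiagd : ∀ c i, d c i i = 0)
    (cm : Fin I → ℝ) (hcm : ∀ i, 0 < cm i)
    (cr : Fin (Ms + 1) → Fin I → ℝ)
    (A : Matrix (Fin I) (Fin I) ℝ)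
    (hA : ∀ i j, A i j =
      if i = j then
        1 + Δt * ∑ r, ∑ l, (θ r / cm i) *
          ((if 0 < θ r then d (cr r) i l else 0) - (if θ r < 0 then p (cr r) i l else 0))
      else
        -(Δt * ∑ r, (θ r / cm j) *
          ((if 0 < θ r then p (cr r) i j else 0) - (if θ r < 0 then d (cr r) i j else 0)))) :
    (∀ i, 0 < A i i) ∧ (∀ i j, i ≠ j → A i j ≤ 0) ∧
      ∀ j, ∑ i ∈ Finset.univ.erase j, |A i j| < A j j := by
  set b : Fin I → Fin I → ℝ := fun i j =>
    Δt * ∑ r, θ r / cm j * signSplit (θ r) (d (cr r) j i) (p (cr r) j i)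
  refine A.columnDominant_of_eq_one_add_colSum b (fun i j => ?_) (fun j => ?_) (fun j => ?_)
    (fun i j hij => ?_)
  · exact mul_nonneg hΔt.le <| sum_nonneg fun r _ =>
      div_mul_signSplit_nonneg (hd _ _ _) (hp _ _ _) (hcm j).le _
  · simp only [b, hdiagd, hdiagp, signSplit_zero_zero, mul_zero, sum_const_zero]
  · rw [hA, if_pos rfl, sum_comm, mul_sum]
    rfl
  · rw [hA, if_neg hij]
    simp only [b, hcons]
    rfl

/-- The mass matrix of each mPDeC correction step has positive diagonal, nonpositive
off-diagonal entries, and is strictly diagonally dominant by columns. -/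
theorem mPDeC_mass_matrix_properties
    (Ms I : ℕ) (θ : Fin (Ms + 1) → ℝ) (Δt : ℝ) (hΔt : 0 < Δt)
    (p d : (Fin I → ℝ) → Fin I → Fin I → ℝ)
    (hp : ∀ c i j, 0 ≤ p c i j) (hd : ∀ c i j, 0 ≤ d c i j)
    (hcons : ∀ c i j, p c i j = d c j i)
    (hdiagp : ∀ c i, p c i i = 0) (hdiagd : ∀ c i, d c i i = 0)
    (cm : Fin I → ℝ) (hcm : ∀ i, 0 < cm i)
    (cr : Fin (Ms + 1) → Fin I → ℝ) (hcr : ∀ r i, 0 < cr r i)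
    (A : Matrix (Fin I) (Fin I) ℝ)
    (hA : ∀ i j, A i j =
      if i = j then
        1 + Δt * ∑ r, ∑ l, (θ r / cm i) *
          ((if 0 < θ r then d (cr r) i l else 0) - (if θ r < 0 then p (cr r) i l else 0))
      else
        -(Δt * ∑ r, (θ r / cm j) *
          ((if 0 < θ r then p (cr r) i j else 0) - (if θ r < 0 then d (cr r) i j else 0)))) :
    (∀ i, 0 < A i i) ∧ (∀ i j, i ≠ j → A i j ≤ 0) ∧
      ∀ j, ∑ i ∈ Finset.univ.erase j, |A i j| < A j j :=
  mPDeC_mass_matrix_properties_general Ms I θ Δt hΔt p d hp hd hcons hdiagp hdiagd cm hcm cr A hA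
end

section
/- Each stage of the mPDeC scheme is unconditionally conservative: if c^{m,(k)} ∈ ℝ^I satisfies, for each i, c_i^{m,(k)} − c_i^0 = Δt Σ_{r=0}^M θ_r^m Σ_j ( p_{i,j}(c^{r,(k-1)}) w_{γ(j,i,θ_r^m)} − d_{i,j}(c^{r,(k-1)}) w_{γ(i,j,θ_r^m)} ), where w_a = c_a^{m,(k)}/c_a^{m,(k-1)} and γ(a,b,θ) = a if θ > 0 and b if θ < 0, then Σ_i c_i^{m,(k)} = Σ_i c_i^0, provided p_{i,j}(c) = d_{j,i}(c) for all i,j,c. -/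
/-- Each stage of the mPDeC scheme is unconditionally conservative:
`Σ_i c_i^{m,(k)} = Σ_i c_i^0`, where the index-swap `γ(a,b,θ)` is `a` if `θ > 0` and `b`
otherwise. -/
theorem mPDeC_stage_conservative
    (Ms I : ℕ) (θ : Fin (Ms + 1) → ℝ) (Δt : ℝ)
    (p d : (Fin I → ℝ) → Fin I → Fin I → ℝ)
    (hp : ∀ c i j, 0 ≤ p c i j) (hd : ∀ c i j, 0 ≤ d c i j)
    (hcons : ∀ c i j, p c i j = d c j i)
    (c0 : Fin I → ℝ)
    (cm : Fin I → ℝ) (hcm : ∀ i, 0 < cm i)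
    (cr : Fin (Ms + 1) → Fin I → ℝ) (hcr : ∀ r i, 0 < cr r i)
    (ck : Fin I → ℝ)
    (hstage : ∀ i, ck i - c0 i =
      Δt * ∑ r, θ r * ∑ j,
        (p (cr r) i j * (ck (if 0 < θ r then j else i) / cm (if 0 < θ r then j else i)) -
         d (cr r) i j * (ck (if 0 < θ r then i else j) / cm (if 0 < θ r then i else j)))) :
    ∑ i, ck i = ∑ i, c0 i := by
  have key : ∀ r : Fin (Ms + 1), ∑ i, ∑ j,
      (p (cr r) i j * (ck (if 0 < θ r then j else i) / cm (if 0 < θ r then j else i)) -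
       d (cr r) i j * (ck (if 0 < θ r then i else j) / cm (if 0 < θ r then i else j))) = 0 := by
    intro r
    by_cases hθ : 0 < θ r
    · simp only [if_pos hθ, Finset.sum_sub_distrib, sub_eq_zero, hcons]
      exact Finset.sum_comm
    · simp only [if_neg hθ, Finset.sum_sub_distrib, sub_eq_zero, hcons]
      exact Finset.sum_comm
  have hsum : ∑ i, (ck i - c0 i) = 0 := by
    have : ∑ i, (ck i - c0 i) = Δt * ∑ r, θ r * ∑ i, ∑ j,
        (p (cr r) i j * (ck (if 0 < θ r then j else i) / cm (if 0 < θ r then j else i)) -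
         d (cr r) i j * (ck (if 0 < θ r then i else j) / cm (if 0 < θ r then i else j))) := by
      simp only [hstage, ← Finset.mul_sum]
      congr 1
      rw [Finset.sum_comm]
      exact Finset.sum_congr rfl fun r _ => (Finset.mul_sum _ _ _).symm
    simp only [this, key, mul_zero, Finset.sum_const_zero]
  rw [← sub_eq_zero, ← Finset.sum_sub_distrib]
  exact hsum
end

section
/- The mPDeC scheme is positivity preserving: under the assumptions that all previous-iteration states are positive and the production-destruction functions are nonnegative and satisfy p_{i,j} = d_{j,i}, the linear system M c^{m,(k)} = c^0 defined by the mPDeC mass matrix has a unique solution, and if c^0 > 0 componentwise then c^{m,(k)} > 0 componentwise. -/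
private lemma ind_nonneg (t c a b : ℝ) (hc : 0 < c) (ha : 0 ≤ a) (hb : 0 ≤ b) :
    0 ≤ (t / c) * ((if 0 < t then a else 0) - (if t < 0 then b else 0)) := by
  rcases lt_trichotomy t 0 with h | h | h
  · rw [if_neg (by linarith), if_pos h]
    have h1 : t / c ≤ 0 := div_nonpos_of_nonpos_of_nonneg h.le hc.le
    nlinarith [mul_nonneg (neg_nonneg.2 h1) hb]
  · simp [h]
  · rw [if_pos h, if_neg (by linarith)]
    have h1 : 0 ≤ t / c := div_nonneg h.le hc.le
    nlinarith

/-- The mPDeC scheme is positivity preserving: the linear system given by the mPDeC mass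
matrix has a unique solution, which is entrywise positive whenever `c^0` is. -/
theorem mPDeC_positivity_preserving
    (Ms I : ℕ) (θ : Fin (Ms + 1) → ℝ) (Δt : ℝ) (hΔt : 0 < Δt)
    (p d : (Fin I → ℝ) → Fin I → Fin I → ℝ)
    (hp : ∀ c i j, 0 ≤ p c i j) (hd : ∀ c i j, 0 ≤ d c i j)
    (hcons : ∀ c i j, p c i j = d c j i)
    (hdiagp : ∀ c i, p c i i = 0) (hdiagd : ∀ c i, d c i i = 0)
    (cm : Fin I → ℝ) (hcm : ∀ i, 0 < cm i)
    (cr : Fin (Ms + 1) → Fin I → ℝ) (hcr : ∀ r i, 0 < cr r i)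
    (A : Matrix (Fin I) (Fin I) ℝ)
    (hA : ∀ i j, A i j =
      if i = j then
        1 + Δt * ∑ r, ∑ l, (θ r / cm i) *
          ((if 0 < θ r then d (cr r) i l else 0) - (if θ r < 0 then p (cr r) i l else 0))
      else
        -(Δt * ∑ r, (θ r / cm j) *
          ((if 0 < θ r then p (cr r) i j else 0) - (if θ r < 0 then d (cr r) i j else 0))))
    (c0 : Fin I → ℝ) :
    (∃! x : Fin I → ℝ, A.mulVec x = c0) ∧
      ∀ x : Fin I → ℝ, A.mulVec x = c0 → (∀ i, 0 < c0 i) → ∀ i, 0 < x i := by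
  -- off-diagonal entries are nonpositive
  have hoff : ∀ i j, i ≠ j → A i j ≤ 0 := by
    intro i j hij
    rw [hA, if_neg hij]
    have h0 : 0 ≤ ∑ r, (θ r / cm j) *
        ((if 0 < θ r then p (cr r) i j else 0) - (if θ r < 0 then d (cr r) i j else 0)) :=
      Finset.sum_nonneg fun r _ => ind_nonneg _ _ _ _ (hcm j) (hp _ _ _) (hd _ _ _)
    have := mul_nonneg hΔt.le h0
    linarith
  -- diagonal entries are at least 1
  have hdiag : ∀ i, 1 ≤ A i i := by
    intro i
    rw [hA, if_pos rfl]
    have h0 : 0 ≤ ∑ r, ∑ l, (θ r / cm i) *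
        ((if 0 < θ r then d (cr r) i l else 0) - (if θ r < 0 then p (cr r) i l else 0)) :=
      Finset.sum_nonneg fun r _ => Finset.sum_nonneg fun l _ =>
        ind_nonneg _ _ _ _ (hcm i) (hd _ _ _) (hp _ _ _)
    have := mul_nonneg hΔt.le h0
    linarith
  -- each column sums to 1
  have hcol : ∀ j, ∑ i, A i j = 1 := by
    intro j
    have hmem : j ∈ (Finset.univ : Finset (Fin I)) := Finset.mem_univ j
    rw [← Finset.add_sum_erase _ _ hmem]
    have h1 : A j j = 1 + Δt * ∑ r, ∑ l, (θ r / cm j) *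
        ((if 0 < θ r then d (cr r) j l else 0) - (if θ r < 0 then p (cr r) j l else 0)) := by
      rw [hA, if_pos rfl]
    have h2 : ∑ i ∈ Finset.univ.erase j, A i j =
        -(Δt * ∑ r, ∑ i ∈ Finset.univ.erase j, (θ r / cm j) *
          ((if 0 < θ r then p (cr r) i j else 0) - (if θ r < 0 then d (cr r) i j else 0))) := by
      have step1 : ∑ i ∈ Finset.univ.erase j, A i j =
          ∑ i ∈ Finset.univ.erase j, -(Δt * ∑ r, (θ r / cm j) *
            ((if 0 < θ r then p (cr r) i j else 0) - (if θ r < 0 then d (cr r) i j else 0))) :=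
        Finset.sum_congr rfl fun i hi => by rw [hA, if_neg (Finset.ne_of_mem_erase hi)]
      rw [step1, Finset.sum_neg_distrib, ← Finset.mul_sum, Finset.sum_comm]
    have key : ∀ r, ∑ l, (θ r / cm j) *
        ((if 0 < θ r then d (cr r) j l else 0) - (if θ r < 0 then p (cr r) j l else 0)) =
        ∑ i ∈ Finset.univ.erase j, (θ r / cm j) *
        ((if 0 < θ r then p (cr r) i j else 0) - (if θ r < 0 then d (cr r) i j else 0)) := by
      intro r
      have e1 : ∑ i ∈ Finset.univ.erase j, p (cr r) i j = ∑ l, d (cr r) j l := by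
        have : ∑ i ∈ Finset.univ.erase j, p (cr r) i j = ∑ i, p (cr r) i j :=
          Finset.sum_erase _ (hdiagp _ _)
        rw [this]
        exact Finset.sum_congr rfl fun i _ => hcons _ _ _
      have e2 : ∑ i ∈ Finset.univ.erase j, d (cr r) i j = ∑ l, p (cr r) j l := by
        have : ∑ i ∈ Finset.univ.erase j, d (cr r) i j = ∑ i, d (cr r) i j :=
          Finset.sum_erase _ (hdiagd _ _)
        rw [this]
        exact Finset.sum_congr rfl fun i _ => (hcons _ _ _).symm
      rcases lt_trichotomy (θ r) 0 with h | h | h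
      · simp only [if_neg (by linarith : ¬ 0 < θ r), if_pos h]
        rw [← Finset.mul_sum, ← Finset.mul_sum]
        congr 1
        simp only [zero_sub, Finset.sum_neg_distrib]
        exact congrArg Neg.neg e2.symm
      · simp [h]
      · simp only [if_pos h, if_neg (by linarith : ¬ θ r < 0), sub_zero]
        rw [← Finset.mul_sum, ← Finset.mul_sum, e1]
    rw [h1, h2]
    have : ∑ r, ∑ l, (θ r / cm j) *
        ((if 0 < θ r then d (cr r) j l else 0) - (if θ r < 0 then p (cr r) j l else 0)) =
        ∑ r, ∑ i ∈ Finset.univ.erase j, (θ r / cm j) *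
        ((if 0 < θ r then p (cr r) i j else 0) - (if θ r < 0 then d (cr r) i j else 0)) :=
      Finset.sum_congr rfl fun r _ => key r
    rw [this]
    ring
  -- core: A.mulVec x ≥ 0 entrywise implies x ≥ 0 entrywise
  have main : ∀ x : Fin I → ℝ, (∀ i, 0 ≤ A.mulVec x i) → ∀ i, 0 ≤ x i := by
    intro x hb
    by_contra hx
    push_neg at hx
    obtain ⟨k, hk⟩ := hx
    set S := Finset.univ.filter (fun i => x i < 0) with hS
    have hkS : k ∈ S := by simp [hS, hk]
    have h1 : (0 : ℝ) ≤ ∑ i ∈ S, A.mulVec x i := Finset.sum_nonneg fun i _ => hb i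
    have h2 : ∑ i ∈ S, A.mulVec x i = ∑ j, (∑ i ∈ S, A i j) * x j := by
      simp only [Matrix.mulVec, dotProduct]
      rw [Finset.sum_comm]
      simp [Finset.sum_mul]
    have h3 : ∀ j, (∑ i ∈ S, A i j) * x j ≤ if j ∈ S then x j else 0 := by
      intro j
      by_cases hj : j ∈ S
      · rw [if_pos hj]
        have hxj : x j < 0 := by simpa [hS] using hj
        have hcoef : 1 ≤ ∑ i ∈ S, A i j := by
          have hsplit : ∑ i ∈ S, A i j + ∑ i ∈ Sᶜ, A i j = ∑ i, A i j :=
            Finset.sum_add_sum_compl S _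
          have hcompl : ∑ i ∈ Sᶜ, A i j ≤ 0 := by
            apply Finset.sum_nonpos
            intro i hi
            apply hoff
            intro hij
            exact (Finset.mem_compl.1 hi) (hij ▸ hj)
          rw [hcol j] at hsplit
          linarith
        nlinarith
      · rw [if_neg hj]
        have hxj : 0 ≤ x j := by
          by_contra h
          exact hj (by simp [hS]; linarith)
        have hcoef : ∑ i ∈ S, A i j ≤ 0 := by
          apply Finset.sum_nonpos
          intro i hi
          exact hoff i j (fun hij => hj (hij ▸ hi))
        exact mul_nonpos_of_nonpos_of_nonneg hcoef hxj
    have h4 : ∑ j, (∑ i ∈ S, A i j) * x j ≤ ∑ j, (if j ∈ S then x j else 0) :=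
      Finset.sum_le_sum fun j _ => h3 j
    have h5 : ∑ j, (if j ∈ S then x j else 0) = ∑ j ∈ S, x j := by
      rw [Finset.sum_ite_mem, Finset.univ_inter]
    have h6 : ∑ j ∈ S, x j < 0 := by
      apply Finset.sum_neg (fun i hi => by simpa [hS] using hi) ⟨k, hkS⟩
    linarith [h1, h2 ▸ h1]
  -- injectivity of mulVec
  have hinj : Function.Injective A.mulVec := by
    intro x y hxy
    have h0 : A.mulVec (x - y) = 0 := by
      rw [Matrix.mulVec_sub, hxy, sub_self]
    have h0' : A.mulVec (y - x) = 0 := by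
      rw [Matrix.mulVec_sub, hxy, sub_self]
    have g1 : ∀ i, 0 ≤ (x - y) i := main _ (fun i => by rw [h0]; exact le_refl 0)
    have g2 : ∀ i, 0 ≤ (y - x) i := main _ (fun i => by rw [h0']; exact le_refl 0)
    funext i
    have := g1 i
    have := g2 i
    simp only [Pi.sub_apply] at *
    linarith
  -- surjectivity via finite dimensionality
  have hinjL : Function.Injective A.mulVecLin := by
    intro x y hxy
    exact hinj (by simpa [Matrix.mulVecLin_apply] using hxy)
  have hsurj : Function.Surjective A.mulVecLin :=
    (LinearMap.injective_iff_surjective).1 hinjL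
  constructor
  · obtain ⟨x, hx⟩ := hsurj c0
    have hx' : A.mulVec x = c0 := by simpa [Matrix.mulVecLin_apply] using hx
    exact ⟨x, hx', fun y hy => hinj (hy.trans hx'.symm)⟩
  · intro x hx hc0 i
    have hxnn : ∀ j, 0 ≤ x j := main x (fun j => by rw [hx]; exact (hc0 j).le)
    have hrow : c0 i = A i i * x i + ∑ j ∈ Finset.univ.erase i, A i j * x j := by
      rw [← hx]
      simp only [Matrix.mulVec, dotProduct]
      rw [← Finset.add_sum_erase _ _ (Finset.mem_univ i)]
    have hrest : ∑ j ∈ Finset.univ.erase i, A i j * x j ≤ 0 :=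
      Finset.sum_nonpos fun j hj =>
        mul_nonpos_of_nonpos_of_nonneg (hoff i j (Finset.ne_of_mem_erase hj).symm) (hxnn j)
    have hAx : 0 < A i i * x i := by
      have := hc0 i
      linarith
    by_contra hxi
    push_neg at hxi
    have : x i = 0 := le_antisymm hxi (hxnn i)
    rw [this, mul_zero] at hAx
    exact lt_irrefl 0 hAx
end

section
/- Let a, b ∈ ℝ with a > 0, and suppose sequences x(Δt) = a + Δt·u(Δt) and y(Δt) = a + Δt·v(Δt) with u(Δt) = u₀ + O(Δt^{k-1}) and v(Δt) = u₀ + O(Δt^{k-1}) for some u₀ ∈ ℝ and k ≥ 1. Then x(Δt)/y(Δt) = 1 + O(Δt^k) as Δt → 0. -/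
/-- Scalar quotient lemma: if `x(Δt) = a + Δt u(Δt)`, `y(Δt) = a + Δt v(Δt)` with `a > 0`
and `u(Δt) = u₀ + O(Δt^{k-1})`, `v(Δt) = u₀ + O(Δt^{k-1})`, then
`x(Δt)/y(Δt) = 1 + O(Δt^k)`. -/
theorem scalar_quotient_lemma
    (a u₀ : ℝ) (ha : 0 < a) (k : ℕ) (hk : 1 ≤ k) (u v : ℝ → ℝ)
    (hu : ∃ C δ : ℝ, 0 < C ∧ 0 < δ ∧ ∀ t : ℝ, 0 < t → t < δ → |u t - u₀| ≤ C * t ^ (k - 1))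
    (hv : ∃ C δ : ℝ, 0 < C ∧ 0 < δ ∧ ∀ t : ℝ, 0 < t → t < δ → |v t - u₀| ≤ C * t ^ (k - 1)) :
    ∃ C δ : ℝ, 0 < C ∧ 0 < δ ∧ ∀ t : ℝ, 0 < t → t < δ →
      |(a + t * u t) / (a + t * v t) - 1| ≤ C * t ^ k := by
  obtain ⟨Cu, δu, hCu, hδu, hbu⟩ := hu
  obtain ⟨Cv, δv, hCv, hδv, hbv⟩ := hv
  refine ⟨2 * (Cu + Cv) / a, min (min δu δv) (min 1 (a / (2 * (|u₀| + Cv + 1)))),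
    by positivity, ?_, ?_⟩
  · have h1 : (0:ℝ) < a / (2 * (|u₀| + Cv + 1)) := by positivity
    simp [lt_min_iff, hδu, hδv, h1]
  intro t ht htδ
  have htu : t < δu := lt_of_lt_of_le htδ (le_trans (min_le_left _ _) (min_le_left _ _))
  have htv : t < δv := lt_of_lt_of_le htδ (le_trans (min_le_left _ _) (min_le_right _ _))
  have ht1 : t < 1 := lt_of_lt_of_le htδ (le_trans (min_le_right _ _) (min_le_left _ _))
  have hta : t < a / (2 * (|u₀| + Cv + 1)) :=
    lt_of_lt_of_le htδ (le_trans (min_le_right _ _) (min_le_right _ _))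
  have hub := hbu t ht htu
  have hvb := hbv t ht htv
  have htk1 : t ^ (k - 1) ≤ 1 := pow_le_one₀ ht.le ht1.le
  -- bound |v t|
  have hvabs : |v t| ≤ |u₀| + Cv := by
    have : |v t| ≤ |v t - u₀| + |u₀| := by
      calc |v t| = |(v t - u₀) + u₀| := by ring_nf
        _ ≤ |v t - u₀| + |u₀| := abs_add_le _ _
    have h2 : Cv * t ^ (k - 1) ≤ Cv := by nlinarith
    linarith
  -- y is bounded below by a/2
  have hy : a / 2 ≤ a + t * v t := by
    have h3 : t * |v t| ≤ t * (|u₀| + Cv) := by nlinarith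
    have h4 : t * (|u₀| + Cv + 1) < a / 2 := by
      rw [lt_div_iff₀ (by positivity : (0:ℝ) < 2 * (|u₀| + Cv + 1))] at hta
      nlinarith
    have h5 : -(t * v t) ≤ t * |v t| := by
      have := neg_abs_le (v t)
      nlinarith [abs_nonneg (v t)]
    nlinarith
  have hy0 : 0 < a + t * v t := lt_of_lt_of_le (by linarith) hy
  have key : (a + t * u t) / (a + t * v t) - 1 = t * (u t - v t) / (a + t * v t) := by
    field_simp
    ring
  rw [key, abs_div, abs_of_pos hy0, div_le_iff₀ hy0]
  have huv : |u t - v t| ≤ (Cu + Cv) * t ^ (k - 1) := by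
    calc |u t - v t| = |(u t - u₀) - (v t - u₀)| := by ring_nf
      _ ≤ |u t - u₀| + |v t - u₀| := abs_sub _ _
      _ ≤ (Cu + Cv) * t ^ (k - 1) := by linarith
  have htk : t * t ^ (k - 1) = t ^ k := by
    rw [← pow_succ' t (k - 1)]
    congr 1
    omega
  have hlhs : |t * (u t - v t)| ≤ (Cu + Cv) * t ^ k := by
    rw [abs_mul, abs_of_pos ht, ← htk]
    nlinarith [abs_nonneg (u t - v t)]
  have hrhs : (Cu + Cv) * t ^ k ≤ 2 * (Cu + Cv) / a * t ^ k * (a + t * v t) := by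
    have htk0 : 0 < t ^ k := pow_pos ht k
    rw [div_mul_eq_mul_div, div_mul_eq_mul_div, le_div_iff₀ ha]
    nlinarith [mul_le_mul_of_nonneg_left hy (by positivity : (0:ℝ) ≤ 2 * (Cu + Cv) * t ^ k)]
  linarith
end

section
/- Abstract DeC convergence: let L^1, L^2 be maps on ℝ^{M×I} depending on Δt such that L^1 is coercive with constant α₁ > 0 (α₁‖c − d‖ ≤ ‖L^1(c) − L^1(d)‖ for all c, d) and L^1 − L^2 is Lipschitz with constant α₂Δt (‖(L^1−L^2)(c) − (L^1−L^2)(d)‖ ≤ α₂Δt‖c−d‖), and assume there exists c* with L^2(c*) = 0. If the iteration c^{(k)} is defined by L^1(c^{(k)}) = L^1(c^{(k-1)}) − L^2(c^{(k-1)}) and η := (α₂/α₁)Δt < 1, then ‖c^{(k)} − c*‖ ≤ η^k ‖c^{(0)} − c*‖ for all k. -/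
/-- Abstract DeC convergence: coercivity of `L¹` and `Δt`-Lipschitz continuity of `L¹ − L²`
imply geometric convergence of the DeC iterates to the zero of `L²`. -/
theorem abstract_DeC_convergence
    (M I : ℕ) (Δt α₁ α₂ : ℝ) (hα₁ : 0 < α₁) (hα₂ : 0 < α₂) (hΔt : 0 < Δt)
    (L1 L2 : (Fin M → Fin I → ℝ) → (Fin M → Fin I → ℝ))
    (hcoer : ∀ c d, α₁ * ‖c - d‖ ≤ ‖L1 c - L1 d‖)
    (hlip : ∀ c d, ‖(L1 c - L2 c) - (L1 d - L2 d)‖ ≤ α₂ * Δt * ‖c - d‖)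
    (cstar : Fin M → Fin I → ℝ) (hstar : L2 cstar = 0)
    (c : ℕ → Fin M → Fin I → ℝ)
    (hiter : ∀ k, L1 (c (k + 1)) = L1 (c k) - L2 (c k))
    (hη : α₂ / α₁ * Δt < 1) :
    ∀ k, ‖c k - cstar‖ ≤ (α₂ / α₁ * Δt) ^ k * ‖c 0 - cstar‖ := by
  intro k
  induction k with
  | zero => simp
  | succ k ih =>
    have step : α₁ * ‖c (k + 1) - cstar‖ ≤ α₂ * Δt * ‖c k - cstar‖ := by
      calc α₁ * ‖c (k + 1) - cstar‖ ≤ ‖L1 (c (k + 1)) - L1 cstar‖ := hcoer _ _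
        _ = ‖(L1 (c k) - L2 (c k)) - (L1 cstar - L2 cstar)‖ := by
            rw [hiter k, hstar]; ring_nf
        _ ≤ α₂ * Δt * ‖c k - cstar‖ := hlip _ _
    have h1 : ‖c (k + 1) - cstar‖ ≤ α₂ / α₁ * Δt * ‖c k - cstar‖ := by
      rw [div_mul_eq_mul_div, div_mul_eq_mul_div, le_div_iff₀ hα₁, mul_comm _ α₁]
      linarith [step]
    calc ‖c (k + 1) - cstar‖ ≤ α₂ / α₁ * Δt * ‖c k - cstar‖ := h1
      _ ≤ α₂ / α₁ * Δt * ((α₂ / α₁ * Δt) ^ k * ‖c 0 - cstar‖) := by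
          apply mul_le_mul_of_nonneg_left ih
          positivity
      _ = (α₂ / α₁ * Δt) ^ (k + 1) * ‖c 0 - cstar‖ := by ring
end
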